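/- Let C be a definable, closed and bounded subset of M^m and let φ, ψ : C → M_{>0} be two definable functions such that for every x ∈ C there exists δ > 0 with φ(x') ≥ ψ(x) for all x' ∈ C with |x'−x| < δ. Then inf φ(C) > 0. -/

import Mathlib

open Set

/-- The projection of `M^{m+n}` onto the first `m` coordinates. -/
def pFst {M : Type*} {m n : ℕ} (z : Fin (m + n) → M) : Fin m → M :=
  fun i => z (Fin.castAdd n i)

/-- The projection of `M^{m+n}` onto the last `n` coordinates. -/
def pSnd {M : Type*} {m n : ℕ} (z : Fin (m + n) → M) : Fin n → M :=
  fun j => z (Fin.natAdd m j)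

/-- The family of sets definable with parameters in an expansion `𝓜 = (M,<,…)` of a
linear order: a van den Dries-style structure on `M` containing the graph of `<`. -/
structure OrdStruc (M : Type*) [LinearOrder M] where
  defin : ∀ {n : ℕ}, Set (Fin n → M) → Prop
  defin_union : ∀ {n : ℕ} {A B : Set (Fin n → M)}, defin A → defin B → defin (A ∪ B)
  defin_compl : ∀ {n : ℕ} {A : Set (Fin n → M)}, defin A → defin Aᶜ
  defin_empty : ∀ {n : ℕ}, defin (∅ : Set (Fin n → M))
  defin_cylinder : ∀ {n : ℕ} {A : Set (Fin n → M)}, defin A →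
    defin {z : Fin (n + 1) → M | Fin.init z ∈ A}
  defin_proj : ∀ {n : ℕ} {A : Set (Fin (n + 1) → M)}, defin A →
    defin ((fun z : Fin (n + 1) → M => Fin.init z) '' A)
  defin_perm : ∀ {n : ℕ} (σ : Equiv.Perm (Fin n)) {A : Set (Fin n → M)}, defin A →
    defin {z : Fin n → M | z ∘ σ ∈ A}
  defin_lt : defin {z : Fin 2 → M | z 0 < z 1}
  defin_eq : defin {z : Fin 2 → M | z 0 = z 1}
  defin_const : ∀ a : M, defin {z : Fin 1 → M | z 0 = a}

/-- The definable sets of an expansion `𝓜 = (M,<,0,+,…)` of an ordered abelian group. -/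
structure GrpStruc (M : Type*) [AddCommGroup M] [LinearOrder M] [IsOrderedAddMonoid M] extends OrdStruc M where
  defin_add : defin {z : Fin 3 → M | z 0 + z 1 = z 2}

/-- The definable sets of an expansion `𝓕 = (F,<,+,0,·,1,…)` of an ordered field. -/
structure FieldStruc (M : Type*) [Field M] [LinearOrder M] [IsStrictOrderedRing M] extends GrpStruc M where
  defin_mul : defin {z : Fin 3 → M | z 0 * z 1 = z 2}

namespace OrdStruc

variable {M : Type*} [LinearOrder M]

/-- A subset of `M` is definable. -/
def defin1 (S : OrdStruc M) (A : Set M) : Prop :=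
  S.defin {z : Fin 1 → M | z 0 ∈ A}

/-- The function `f : C → M`, `C ⊆ M^m`, is definable: its graph over `C` is definable. -/
def DefinableFunOn (S : OrdStruc M) {m : ℕ} (C : Set (Fin m → M))
    (f : (Fin m → M) → M) : Prop :=
  S.defin {z : Fin (m + 1) → M | Fin.init z ∈ C ∧ z (Fin.last m) = f (Fin.init z)}

/-- The map `f : C → M^k`, `C ⊆ M^m`, is definable: its graph over `C` is definable. -/
def DefinableMapOn (S : OrdStruc M) {m k : ℕ} (C : Set (Fin m → M))
    (f : (Fin m → M) → Fin k → M) : Prop :=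
  S.defin {z : Fin (m + k) → M | pFst z ∈ C ∧ pSnd z = f (pFst z)}

/-- The two-variable function `f : C × P → M` is definable. -/
def DefinableFun2On (S : OrdStruc M) {m n : ℕ} (C : Set (Fin m → M))
    (P : Set (Fin n → M)) (f : (Fin m → M) → (Fin n → M) → M) : Prop :=
  S.defin {z : Fin (m + n + 1) → M |
    pFst (Fin.init z) ∈ C ∧ pSnd (Fin.init z) ∈ P ∧
    z (Fin.last (m + n)) = f (pFst (Fin.init z)) (pSnd (Fin.init z))}

/-- A definable family of functions `{f_t : C → M}_{t ∈ I}` given by `F(x,t) = f_t(x)`. -/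
def DefinableFamilyOn (S : OrdStruc M) {m : ℕ} (C : Set (Fin m → M)) (I : Set M)
    (F : (Fin m → M) → M → M) : Prop :=
  S.defin {z : Fin (m + 1 + 1) → M |
    Fin.init (Fin.init z) ∈ C ∧ Fin.init z (Fin.last m) ∈ I ∧
    z (Fin.last (m + 1)) = F (Fin.init (Fin.init z)) (Fin.init z (Fin.last m))}

end OrdStruc

/-- `𝓜` is definably complete: every definable subset of `M` has a supremum and an
infimum in `M ∪ {±∞}`. -/
def DefinablyComplete {M : Type*} [LinearOrder M] (S : OrdStruc M) : Prop :=
  ∀ A : Set M, S.defin1 A → A.Nonempty →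
    (BddAbove A → ∃ a, IsLUB A a) ∧ (BddBelow A → ∃ a, IsGLB A a)

/-- `𝓜` is locally o-minimal: for every definable `A ⊆ M` and every `a ∈ M` there is an
open interval `I ∋ a` such that `A ∩ I` is a finite union of points and open intervals. -/
def LocallyOMinimal {M : Type*} [LinearOrder M] (S : OrdStruc M) : Prop :=
  ∀ A : Set M, S.defin1 A → ∀ a : M, ∃ b c : M, b < a ∧ a < c ∧
    ∃ (s : Finset M) (t : Finset (M × M)),
      A ∩ Set.Ioo b c = (↑s : Set M) ∪ ⋃ p ∈ t, Set.Ioo p.1 p.2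

/-- Open intervals of `M` (with possibly infinite endpoints). -/
def IsOpenInterval {M : Type*} [LinearOrder M] (I : Set M) : Prop :=
  (∃ a b : M, I = Set.Ioo a b) ∨ (∃ a : M, I = Set.Ioi a) ∨
    (∃ b : M, I = Set.Iio b) ∨ I = Set.univ

/-- Open boxes in `M^n`: products of `n` open intervals. -/
def IsOpenBox {M : Type*} [LinearOrder M] {n : ℕ} (B : Set (Fin n → M)) : Prop :=
  ∃ I : Fin n → Set M, (∀ i, IsOpenInterval (I i)) ∧ B = Set.pi Set.univ I

/-- Some coordinate projection of `X ⊆ M^n` onto `M^d` has an image with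
nonempty interior. -/
def HasDimAtLeast {M : Type*} [TopologicalSpace M] {n : ℕ}
    (X : Set (Fin n → M)) (d : ℕ) : Prop :=
  ∃ ι : Fin d → Fin n, Function.Injective ι ∧
    (interior ((fun x : Fin n → M => x ∘ ι) '' X)).Nonempty

open Classical in
/-- The dimension of a subset of `M^n`: the largest `d` such that some coordinate
projection onto `M^d` has an image with nonempty interior; `⊥` (i.e. `-∞`) for `∅`. -/
noncomputable def sdim {M : Type*} [TopologicalSpace M] {n : ℕ}
    (X : Set (Fin n → M)) : WithBot ℕ :=
  if X.Nonempty then (Nat.findGreatest (HasDimAtLeast X) n : WithBot ℕ) else ⊥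

/-- `|x| = max_{1 ≤ i ≤ n} |x_i|`. -/
def vnorm {M : Type*} [AddCommGroup M] [LinearOrder M] [IsOrderedAddMonoid M] {n : ℕ} (x : Fin n → M) : M :=
  (List.ofFn fun i => |x i|).foldr max 0

/-- A subset of `M^n` is bounded. -/
def VBdd {M : Type*} [AddCommGroup M] [LinearOrder M] [IsOrderedAddMonoid M] {n : ℕ} (A : Set (Fin n → M)) : Prop :=
  ∃ r : M, ∀ x ∈ A, vnorm x < r

/-- The box `𝓑_n(x, ε) = {y : |x_i - y_i| < ε for all i}`. -/
def vball {M : Type*} [AddCommGroup M] [LinearOrder M] [IsOrderedAddMonoid M] {n : ℕ} (x : Fin n → M) (ε : M) :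
    Set (Fin n → M) :=
  {y | ∀ i, |x i - y i| < ε}

/-- `fib(X, π, x) = {y ∈ M^e : (x,y) ∈ X}`, where `π : M^{d+e} → M^d` is the
projection onto the first `d` coordinates. -/
def fibAt {M : Type*} {d e : ℕ} (X : Set (Fin (d + e) → M)) (x : Fin d → M) :
    Set (Fin e → M) :=
  {y | Fin.append x y ∈ X}

/-- `X ⊆ M^{d+e}` is a `π`-special submanifold, `π` the projection onto the first `d`
coordinates: for every `x ∈ M^d` there are an open box `U ∋ x` and mutually disjoint
open boxes `V_y` (`y ∈ fib(X,π,x)`) with `π(V_y) = U`, covering `X ∩ π⁻¹(U)` and such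
that each `V_y ∩ X` is the graph of a continuous map on `U`. -/
def SpecialFirst {M : Type*} [LinearOrder M] [TopologicalSpace M] {d e : ℕ}
    (X : Set (Fin (d + e) → M)) : Prop :=
  ∀ x : Fin d → M, ∃ U : Set (Fin d → M), IsOpenBox U ∧ x ∈ U ∧
    ∃ V : (Fin e → M) → Set (Fin (d + e) → M),
      (∀ y ∈ fibAt X x, IsOpenBox (V y)) ∧
      (∀ y ∈ fibAt X x, ∀ y' ∈ fibAt X x, y ≠ y' → V y ∩ V y' = ∅) ∧
      (∀ y ∈ fibAt X x, pFst '' V y = U) ∧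
      (∀ z ∈ X, pFst z ∈ U → ∃ y ∈ fibAt X x, z ∈ V y) ∧
      (∀ y ∈ fibAt X x, ∃ g : (Fin d → M) → Fin e → M,
        ContinuousOn g U ∧ V y ∩ X = (fun u => Fin.append u (g u)) '' U)

/-- `X ⊆ M^{d+e}` is a `π`-quasi-special submanifold: like `SpecialFirst` but only for
`x ∈ π(X)` and without the covering condition (2). -/
def QuasiSpecialFirst {M : Type*} [LinearOrder M] [TopologicalSpace M] {d e : ℕ}
    (X : Set (Fin (d + e) → M)) : Prop :=
  ∀ x ∈ pFst '' X, ∃ U : Set (Fin d → M), IsOpenBox U ∧ x ∈ U ∧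
    ∃ V : (Fin e → M) → Set (Fin (d + e) → M),
      (∀ y ∈ fibAt X x, IsOpenBox (V y)) ∧
      (∀ y ∈ fibAt X x, ∀ y' ∈ fibAt X x, y ≠ y' → V y ∩ V y' = ∅) ∧
      (∀ y ∈ fibAt X x, pFst '' V y = U) ∧
      (∀ y ∈ fibAt X x, ∃ g : (Fin d → M) → Fin e → M,
        ContinuousOn g U ∧ V y ∩ X = (fun u => Fin.append u (g u)) '' U)

/-- `C ⊆ M^n` is a special submanifold: it is a `π`-special submanifold for some
coordinate projection `π : M^n → M^d` (obtained by permuting coordinates and then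
projecting onto the first `d` coordinates). -/
def IsSpecial {M : Type*} [LinearOrder M] [TopologicalSpace M] {n : ℕ}
    (C : Set (Fin n → M)) : Prop :=
  ∃ (d e : ℕ) (σ : Fin n ≃ Fin (d + e)),
    SpecialFirst {z : Fin (d + e) → M | z ∘ σ ∈ C}

/-- `(X, π)` is locally bounded at `x ∈ π(X)`. -/
def LocBddAt {M : Type*} [AddCommGroup M] [LinearOrder M] [IsOrderedAddMonoid M] {d e : ℕ}
    (X : Set (Fin (d + e) → M)) (x : Fin d → M) : Prop :=
  ∃ U : Set (Fin d → M), IsOpenBox U ∧ VBdd U ∧ x ∈ U ∧ VBdd {z ∈ X | pFst z ∈ U}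

/-- `(X, π, T, η, ρ)` is a special submanifold with a tubular neighborhood (the data
`T`, `η`, `ρ` over the special submanifold `X`), `π` projection onto first `d` coords. -/
def TubularFirst {M : Type*} [AddCommGroup M] [LinearOrder M] [IsOrderedAddMonoid M] [TopologicalSpace M] {d e : ℕ}
    (S : GrpStruc M) (X T : Set (Fin (d + e) → M))
    (η : (Fin d → M) → M) (ρ : (Fin (d + e) → M) → Fin (d + e) → M) : Prop :=
  (sdim X = ((d + e : ℕ) : WithBot ℕ) ∧ IsOpen X ∧ T = X ∧ (∀ u, η u = 0) ∧
    ∀ z ∈ X, ρ z = z) ∨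
  (sdim X < ((d + e : ℕ) : WithBot ℕ) ∧
    -- (a)
    S.defin T ∧ IsOpen T ∧ T ⊆ {z | pFst z ∈ pFst '' X} ∧
    -- (b)
    S.toOrdStruc.DefinableFunOn (pFst '' X) η ∧ ContinuousOn η (pFst '' X) ∧
    (∀ u ∈ pFst '' X, 0 < η u) ∧ (∃ r : M, ∀ u ∈ pFst '' X, η u < r) ∧
    (∀ u ∈ pFst '' X, fibAt T u = ⋃ x ∈ fibAt X u, vball x (η u)) ∧
    (∀ u ∈ pFst '' X, ∀ x₁ ∈ fibAt X u, ∀ x₂ ∈ fibAt X u, x₁ ≠ x₂ →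
      vball x₁ (η u) ∩ vball x₂ (η u) = ∅) ∧
    -- (c)
    S.toOrdStruc.DefinableMapOn T ρ ∧ ContinuousOn ρ T ∧
    (∀ z ∈ T, ρ z ∈ X) ∧ (∀ z ∈ X, ρ z = z) ∧
    (∀ u : Fin d → M, ρ '' {z ∈ T | pFst z = u} ⊆ {z ∈ X | pFst z = u}) ∧
    (∀ u ∈ pFst '' X, ∀ x ∈ fibAt X u, ∀ y ∈ vball x (η u),
      ρ (Fin.append u y) = Fin.append u x))

/-!
If `φ` took arbitrarily small values on `C`, definable completeness would let us pin down, one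
coordinate at a time, a point `c` such that points `x ∈ C` with arbitrarily small `φ x` lie
arbitrarily close to `c`: the `j`-th coordinate of `c` is the supremum of the definable set of
those `u` which, for some `t > 0`, bound `x j` from below on all `x ∈ C` with `φ x < t` that are
`t`-close to `c` in the coordinates already chosen. Boundedness of `C` makes these suprema exist
and closedness puts `c` in `C`; but near `c` we have `φ ≥ ψ c > 0`, a contradiction.
-/

theorem Fin.exists_perm_comp_castLE {n N : ℕ} (h : n ≤ N) {ρ : Fin n → Fin N}
    (hρ : Function.Injective ρ) : ∃ σ : Equiv.Perm (Fin N), σ ∘ Fin.castLE h = ρ := by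
  classical
  let e := (Equiv.ofInjective _ (Fin.castLE_injective h)).symm.trans (Equiv.ofInjective ρ hρ)
  refine ⟨e.extendSubtype, funext fun i => ?_⟩
  simp [e, Equiv.extendSubtype_apply_of_mem e _ (Set.mem_range_self i)]

namespace OrdStruc

variable {M : Type*} [LinearOrder M] (S : OrdStruc M)

theorem defin_inter {n : ℕ} {A B : Set (Fin n → M)} (hA : S.defin A) (hB : S.defin B) :
    S.defin (A ∩ B) := by
  simpa using S.defin_compl (S.defin_union (S.defin_compl hA) (S.defin_compl hB))

theorem defin_univ {n : ℕ} : S.defin (univ : Set (Fin n → M)) := by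
  simpa using S.defin_compl (S.defin_empty (n := n))

theorem defin_biInter {ι : Type*} {n : ℕ} (s : Finset ι) {A : ι → Set (Fin n → M)}
    (hA : ∀ i ∈ s, S.defin (A i)) : S.defin (⋂ i ∈ s, A i) := by
  classical
  induction s using Finset.induction_on with
  | empty => simpa using S.defin_univ
  | insert j s _ ih =>
    rw [Finset.set_biInter_insert]
    exact S.defin_inter (hA j (Finset.mem_insert_self j s))
      (ih fun i hi => hA i (Finset.mem_insert_of_mem hi))

theorem defin_comp_castLE {n : ℕ} {A : Set (Fin n → M)} (hA : S.defin A) {N : ℕ}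
    (h : n ≤ N) : S.defin {z : Fin N → M | z ∘ Fin.castLE h ∈ A} := by
  induction N, h using Nat.le_induction with
  | base => exact hA
  | succ N hN ih => exact S.defin_cylinder ih

theorem defin_comp_of_injective {n N : ℕ} {A : Set (Fin n → M)} (hA : S.defin A)
    {ρ : Fin n → Fin N} (hρ : Function.Injective ρ) :
    S.defin {z : Fin N → M | z ∘ ρ ∈ A} := by
  have h : n ≤ N := by simpa using Fintype.card_le_of_injective ρ hρ
  obtain ⟨σ, hσ⟩ := Fin.exists_perm_comp_castLE h hρ
  simpa [← hσ, Function.comp_assoc] using S.defin_perm σ (S.defin_comp_castLE hA h)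

theorem defin_exists_snoc {n : ℕ} {A : Set (Fin (n + 1) → M)} (hA : S.defin A) :
    S.defin {y : Fin n → M | ∃ a, Fin.snoc y a ∈ A} := by
  convert S.defin_proj hA using 1
  ext y
  constructor
  · rintro ⟨a, ha⟩
    exact ⟨_, ha, by simp⟩
  · rintro ⟨z, hz, rfl⟩
    exact ⟨z (Fin.last n), by rwa [Fin.snoc_init_self]⟩

theorem defin_exists_append {n k : ℕ} {A : Set (Fin (n + k) → M)} (hA : S.defin A) :
    S.defin {y : Fin n → M | ∃ w : Fin k → M, Fin.append y w ∈ A} := by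
  induction k with
  | zero => simpa [Fin.append_right_nil] using hA
  | succ k ih =>
    convert ih (S.defin_exists_snoc hA) using 1
    ext y
    constructor
    · rintro ⟨w, hw⟩
      exact ⟨Fin.init w, w (Fin.last k), by rwa [← Fin.append_snoc, Fin.snoc_init_self]⟩
    · rintro ⟨w, a, hw⟩
      exact ⟨Fin.snoc w a, by rwa [Fin.append_snoc]⟩

theorem defin_snoc_const {n : ℕ} {A : Set (Fin (n + 1) → M)} (hA : S.defin A) (a : M) :
    S.defin {y : Fin n → M | Fin.snoc y a ∈ A} := by
  have hlast : S.defin {z : Fin (n + 1) → M | z (Fin.last n) = a} :=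
    S.defin_comp_of_injective (S.defin_const a) (ρ := ![Fin.last n])
      (Function.injective_of_subsingleton _)
  convert S.defin_exists_snoc (S.defin_inter hA hlast) using 1
  ext y
  simp

end OrdStruc

namespace GrpStruc

variable {M : Type*} [AddCommGroup M] [LinearOrder M] [IsOrderedAddMonoid M] (S : GrpStruc M)

theorem defin_lt_add : S.defin {z : Fin 3 → M | z 0 < z 1 + z 2} := by
  have hsum := S.defin_comp_of_injective S.defin_add (ρ := (![1, 2, 3] : Fin 3 → Fin 4))
    (by decide)
  have hlt := S.defin_comp_of_injective S.defin_lt (ρ := (![0, 3] : Fin 2 → Fin 4)) (by decide)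
  convert S.defin_exists_snoc (S.defin_inter hsum hlt) using 1
  ext z
  simp [Fin.snoc]
  rfl

theorem defin_abs_sub_lt (a : M) : S.defin {w : Fin 2 → M | |w 0 - a| < w 1} := by
  have hupper := S.defin_snoc_const S.defin_lt_add a
  have hlower := S.defin_snoc_const (S.defin_comp_of_injective S.defin_lt_add
    (ρ := (![2, 1, 0] : Fin 3 → Fin 3)) (by decide)) a
  convert S.defin_inter hupper hlower using 1
  ext w
  simp [Fin.snoc, abs_sub_lt_iff, sub_lt_iff_lt_add]

theorem defin_const_lt (a : M) : S.defin {w : Fin 1 → M | a < w 0} := by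
  convert S.defin_snoc_const (S.defin_comp_of_injective S.defin_lt
    (ρ := (![1, 0] : Fin 2 → Fin 2)) (by decide)) a using 1
  ext w
  simp [Fin.snoc]

variable {m : ℕ} {C : Set (Fin m → M)} {φ : (Fin m → M) → M}

theorem defin_exists_small_near_lt (hφ : S.DefinableFunOn C φ) (s : Finset (Fin m))
    (j : Fin m) (c : Fin m → M) :
    S.defin {y : Fin 2 → M | ∃ x ∈ C, φ x < y 1 ∧ (∀ i ∈ s, |x i - c i| < y 1) ∧ x j < y 0} := by
  -- coordinates of `M^(2 + (m + 1))`: `(u, t, x, φ x)`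
  let xc (i : Fin m) : Fin (2 + (m + 1)) := Fin.natAdd 2 i.castSucc
  let v : Fin (2 + (m + 1)) := Fin.natAdd 2 (Fin.last m)
  let u : Fin (2 + (m + 1)) := Fin.castAdd (m + 1) 0
  let t : Fin (2 + (m + 1)) := Fin.castAdd (m + 1) 1
  have hE := S.defin_inter (S.defin_inter (S.defin_inter
    (S.defin_comp_of_injective hφ (Fin.natAdd_injective _ 2))
    (S.defin_comp_of_injective S.defin_lt ((injective_pair_iff_ne (x := v) (y := t)).mpr ?_)))
    (S.defin_biInter s fun i _ => S.defin_comp_of_injective (S.defin_abs_sub_lt (c i))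
      ((injective_pair_iff_ne (x := xc i) (y := t)).mpr ?_)))
    (S.defin_comp_of_injective S.defin_lt ((injective_pair_iff_ne (x := xc j) (y := u)).mpr ?_))
  · convert S.defin_exists_append hE using 1
    ext y
    have hright (w : Fin (m + 1) → M) : Fin.append y w ∘ Fin.natAdd 2 = w :=
      funext (Fin.append_right y w)
    simp only [mem_ofPred_eq, mem_inter_iff, mem_iInter, hright, Function.comp_apply,
      Matrix.cons_val_zero, Matrix.cons_val_one, xc, v, u, t, Fin.append_left, Fin.append_right]
    constructor
    · rintro ⟨x, hxC, hφx, hnear, hxj⟩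
      exact ⟨Fin.snoc x (φ x), ⟨⟨by simpa, by simpa⟩, by simpa⟩, by simpa⟩
    · rintro ⟨w, ⟨⟨⟨hwC, hwφ⟩, hv⟩, hnear⟩, hwj⟩
      exact ⟨Fin.init w, hwC, hwφ ▸ hv, hnear, hwj⟩
  all_goals simp [Fin.ext_iff, xc, v, u, t] <;> omega

theorem defin1_eventual_lower_bounds (hφ : S.DefinableFunOn C φ) (s : Finset (Fin m))
    (j : Fin m) (c : Fin m → M) :
    S.defin1 {u | ∃ t, 0 < t ∧ ∀ x ∈ C, φ x < t → (∀ i ∈ s, |x i - c i| < t) → u ≤ x j} := by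
  have hpos := S.defin_comp_of_injective (S.defin_const_lt 0) (ρ := (![1] : Fin 1 → Fin 2))
    (Function.injective_of_subsingleton _)
  rw [OrdStruc.defin1]
  convert S.defin_exists_snoc
    (S.defin_inter hpos (S.defin_compl (S.defin_exists_small_near_lt hφ s j c))) using 1
  ext z
  simp [Fin.snoc]

end GrpStruc

section OrderedGroup

variable {M : Type*} [AddCommGroup M] [LinearOrder M] [IsOrderedAddMonoid M]

theorem abs_le_vnorm {n : ℕ} (x : Fin n → M) (i : Fin n) : |x i| ≤ vnorm x :=
  List.le_max_of_le' 0 (List.mem_ofFn.mpr ⟨i, rfl⟩) le_rfl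

theorem vnorm_lt {n : ℕ} {x : Fin n → M} {r : M} (hr : 0 < r) (h : ∀ i, |x i| < r) :
    vnorm x < r := by
  suffices ∀ l : List M, (∀ a ∈ l, a < r) → l.foldr max 0 < r from
    this _ fun a ha => by obtain ⟨i, rfl⟩ := List.mem_ofFn.mp ha; exact h i
  intro l hl
  induction l with
  | nil => exact hr
  | cons a l ih => simp_all

open Filter Topology in
theorem nhds_pi_hasBasis_abs_sub_lt [TopologicalSpace M] [OrderTopology M] [Nontrivial M]
    {ι : Type*} [Finite ι] (c : ι → M) :
    (𝓝 c).HasBasis (fun ε : M => 0 < ε) fun ε => {x | ∀ i, |x i - c i| < ε} := by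
  have hnhds : 𝓝 c = ⨅ ε > 0, 𝓟 {x | ∀ i, |x i - c i| < ε} := by
    simp only [nhds_pi, Filter.pi, nhds_eq_iInf_abs_sub, comap_iInf, comap_principal]
    rw [iInf_comm]
    refine iInf_congr fun ε => ?_
    rw [iInf_comm]
    refine iInf_congr fun _ => ?_
    rw [iInf_principal]
    congr 1
    ext x
    simp [abs_sub_comm]
  rw [hnhds]
  exact hasBasis_biInf_principal' (fun a ha b hb => ⟨min a b, lt_min ha hb,
    fun x hx i => (hx i).trans_le (min_le_left a b),
    fun x hx i => (hx i).trans_le (min_le_right a b)⟩) exists_zero_lt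

def SmallValuesNear {m : ℕ} (C : Set (Fin m → M)) (φ : (Fin m → M) → M)
    (s : Finset (Fin m)) (c : Fin m → M) : Prop :=
  ∀ t > 0, ∃ x ∈ C, φ x < t ∧ ∀ i ∈ s, |x i - c i| < t

namespace SmallValuesNear

variable {m : ℕ} {C : Set (Fin m → M)} {φ : (Fin m → M) → M}

theorem exists_update [Nontrivial M] {S : GrpStruc M} (hDC : DefinablyComplete S.toOrdStruc)
    (hC : VBdd C) (hφ : S.DefinableFunOn C φ) {s : Finset (Fin m)} {c : Fin m → M}
    (h : SmallValuesNear C φ s c) (j : Fin m) :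
    ∃ b, SmallValuesNear C φ (insert j s) (Function.update c j b) := by
  set L := {u | ∃ t, 0 < t ∧ ∀ x ∈ C, φ x < t → (∀ i ∈ s, |x i - c i| < t) → u ≤ x j}
  obtain ⟨r, hr⟩ := hC
  have hcoord (x) (hx : x ∈ C) : |x j| < r := (abs_le_vnorm x j).trans_lt (hr x hx)
  have hne : L.Nonempty := by
    obtain ⟨t, ht⟩ := exists_zero_lt (α := M)
    exact ⟨-r, t, ht, fun x hx _ _ => (neg_lt_of_abs_lt (hcoord x hx)).le⟩
  have hbdd : BddAbove L := by
    refine ⟨r, fun u ⟨t, ht, hu⟩ => ?_⟩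
    obtain ⟨x, hxC, hφx, hnear⟩ := h t ht
    exact (hu x hxC hφx hnear).trans ((le_abs_self _).trans (hcoord x hxC).le)
  obtain ⟨b, hb⟩ := (hDC L (S.defin1_eventual_lower_bounds hφ s j c) hne).1 hbdd
  refine ⟨b, fun t ht => ?_⟩
  obtain ⟨u, ⟨t₀, ht₀, hu⟩, hbu, -⟩ := hb.exists_between_sub_self ht
  have hnotin : b + t ∉ L := fun hmem => (lt_add_of_pos_right b ht).not_ge (hb.1 hmem)
  obtain ⟨x, hxC, hφx, hnear, hxj⟩ : ∃ x ∈ C, φ x < min t t₀ ∧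
      (∀ i ∈ s, |x i - c i| < min t t₀) ∧ x j < b + t := by
    by_contra! hno
    exact hnotin ⟨min t t₀, lt_min ht ht₀, hno⟩
  have hux : u ≤ x j := hu x hxC (hφx.trans_le (min_le_right _ _))
    fun i hi => (hnear i hi).trans_le (min_le_right _ _)
  refine ⟨x, hxC, hφx.trans_le (min_le_left _ _), fun i hi => ?_⟩
  rcases eq_or_ne i j with rfl | hij
  · rw [Function.update_self, abs_sub_lt_iff]
    exact ⟨sub_lt_iff_lt_add'.mpr hxj, sub_lt_comm.mp (hbu.trans_le hux)⟩
  · rw [Function.update_of_ne hij]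
    exact (hnear i (Finset.mem_of_mem_insert_of_ne hi hij)).trans_le (min_le_left _ _)

theorem exists_of_forall_exists_lt [Nontrivial M] {S : GrpStruc M}
    (hDC : DefinablyComplete S.toOrdStruc) (hC : VBdd C) (hφ : S.DefinableFunOn C φ)
    (hsmall : ∀ t > 0, ∃ x ∈ C, φ x < t) (s : Finset (Fin m)) :
    ∃ c, SmallValuesNear C φ s c := by
  induction s using Finset.induction_on with
  | empty => exact ⟨0, fun t ht => (hsmall t ht).imp fun x ⟨hx, hφx⟩ => ⟨hx, hφx, by simp⟩⟩
  | insert j s _ ih =>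
    obtain ⟨c, hc⟩ := ih
    obtain ⟨b, hb⟩ := hc.exists_update hDC hC hφ j
    exact ⟨_, hb⟩

theorem mem_of_isClosed [TopologicalSpace M] [OrderTopology M] [Nontrivial M] {c : Fin m → M}
    (hC : IsClosed C) (h : SmallValuesNear C φ Finset.univ c) : c ∈ C := by
  refine hC.closure_subset ((mem_closure_iff_nhds_basis (nhds_pi_hasBasis_abs_sub_lt c)).2 ?_)
  intro t ht
  obtain ⟨x, hxC, -, hnear⟩ := h t ht
  exact ⟨x, hxC, fun i => hnear i (Finset.mem_univ i)⟩

end SmallValuesNear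

end OrderedGroup

theorem pos_inf_of_locally_bounded_below_general
    {M : Type*} [AddCommGroup M] [LinearOrder M] [IsOrderedAddMonoid M] [Nontrivial M]
    [TopologicalSpace M] [OrderTopology M]
    (S : GrpStruc M) (hDC : DefinablyComplete S.toOrdStruc)
    {m : ℕ} (C : Set (Fin m → M)) (hCcl : IsClosed C) (hCbdd : VBdd C)
    (φ ψ : (Fin m → M) → M)
    (hφdef : S.toOrdStruc.DefinableFunOn C φ)
    (hψpos : ∀ x ∈ C, 0 < ψ x)
    (h : ∀ x ∈ C, ∃ δ > (0 : M), ∀ x' ∈ C, vnorm (x' - x) < δ → ψ x ≤ φ x') :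
    ∃ b > (0 : M), ∀ x ∈ C, b ≤ φ x := by
  by_contra! hsmall
  obtain ⟨c, hc⟩ :=
    SmallValuesNear.exists_of_forall_exists_lt hDC hCbdd hφdef hsmall Finset.univ
  have hcC : c ∈ C := hc.mem_of_isClosed hCcl
  obtain ⟨δ, hδ, hφ_ge⟩ := h c hcC
  obtain ⟨x, hxC, hφx, hnear⟩ := hc (min δ (ψ c)) (lt_min hδ (hψpos c hcC))
  have hxc : vnorm (x - c) < δ :=
    vnorm_lt hδ fun i => (hnear i (Finset.mem_univ i)).trans_le (min_le_left _ _)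
  exact (hφx.trans_le (min_le_right _ _)).not_ge (hφ_ge x hxC hxc)

/-- Lemma 3.1: if `φ, ψ : C → M_{>0}` are definable, `C` definable closed bounded, and
near every `x ∈ C` one has `φ(x') ≥ ψ(x)`, then `inf φ(C) > 0`. -/
theorem pos_inf_of_locally_bounded_below
    {M : Type*} [AddCommGroup M] [LinearOrder M] [IsOrderedAddMonoid M] [DenselyOrdered M] [Nontrivial M]
    [TopologicalSpace M] [OrderTopology M]
    (S : GrpStruc M) (hDC : DefinablyComplete S.toOrdStruc)
    (hLO : LocallyOMinimal S.toOrdStruc)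
    {m : ℕ} (C : Set (Fin m → M)) (hCdef : S.defin C) (hCcl : IsClosed C) (hCbdd : VBdd C)
    (φ ψ : (Fin m → M) → M)
    (hφdef : S.toOrdStruc.DefinableFunOn C φ) (hψdef : S.toOrdStruc.DefinableFunOn C ψ)
    (hφpos : ∀ x ∈ C, 0 < φ x) (hψpos : ∀ x ∈ C, 0 < ψ x)
    (h : ∀ x ∈ C, ∃ δ > (0 : M), ∀ x' ∈ C, vnorm (x' - x) < δ → ψ x ≤ φ x') :
    ∃ b > (0 : M), ∀ x ∈ C, b ≤ φ x :=
  pos_inf_of_locally_bounded_below_general S hDC C hCcl hCbdd φ ψ hφdef hψpos h
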